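/- Let m ≥ 0 be an integer, let f₀,…,f_m, q₀, q₁, κ₁, κ₂ be real constants, and set f̂(x₁) = Σ_{k=0}^m f_k x₁^k, q̂(x₁) = q₀ + q₁ x₁ − Σ_{k=0}^m f_k x₁^{k+2}/((k+2)(k+1)), and p̂(x₁,x₂) = q₀ + q₁ x₁ − Σ_{k=0}^m f_k·Re((x₁ + i x₂)^{k+2})/((k+2)(k+1)). Then p̂ is harmonic on ℝ² (hence on Ω = ℝ² ∖ Σ), and on Σ the pair (p̂, q̂) satisfies: −(κ₁/2)p̂⁺_{x₂} − (κ₁/2)p̂⁻_{x₂} + p̂⁺ = q̂; (κ₁/2)p̂⁺_{x₂} + (κ₁/2)p̂⁻_{x₂} + p̂⁻ = q̂; and −q̂_{x₁x₁} = f̂ + κ₂(p̂⁺_{x₂} − p̂⁻_{x₂}). -/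

import Mathlib

open Complex Filter Real

/-- `f̂(x₁) = Σ_{k=0}^m f_k x₁^k`. -/
noncomputable def fPoly (m : ℕ) (f : ℕ → ℝ) (x₁ : ℝ) : ℝ :=
  ∑ k ∈ Finset.range (m + 1), f k * x₁ ^ k

/-- `q̂(x₁) = q₀ + q₁x₁ - Σ_{k=0}^m f_k x₁^{k+2}/((k+2)(k+1))`. -/
noncomputable def qPoly (m : ℕ) (f : ℕ → ℝ) (q₀ q₁ : ℝ) (x₁ : ℝ) : ℝ :=
  q₀ + q₁ * x₁ - ∑ k ∈ Finset.range (m + 1), f k * x₁ ^ (k + 2) / ((k + 2) * (k + 1))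

/-- `p̂(x₁,x₂) = q₀ + q₁x₁ - Σ_{k=0}^m f_k·Re((x₁+ix₂)^{k+2})/((k+2)(k+1))`. -/
noncomputable def pPoly (m : ℕ) (f : ℕ → ℝ) (q₀ q₁ : ℝ) (x₁ x₂ : ℝ) : ℝ :=
  q₀ + q₁ * x₁ - ∑ k ∈ Finset.range (m + 1),
    f k * (((x₁ : ℂ) + Complex.I * (x₂ : ℂ)) ^ (k + 2)).re / ((k + 2) * (k + 1))

/-- Second partial derivative in the first variable. -/
noncomputable def dxx (p : ℝ → ℝ → ℝ) (x y : ℝ) : ℝ :=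
  deriv (fun t => deriv (fun s => p s y) t) x

/-- Second partial derivative in the second variable. -/
noncomputable def dyy (p : ℝ → ℝ → ℝ) (x y : ℝ) : ℝ :=
  deriv (fun t => deriv (fun s => p x s) t) y

/-- Partial derivative in the second variable. -/
noncomputable def dy (p : ℝ → ℝ → ℝ) (x y : ℝ) : ℝ := deriv (fun s => p x s) y

/-!
`p̂` is the real part of the entire function
`F z = q₀ + q₁ z - Σ f_k z^{k+2}/((k+2)(k+1))`. Along the coordinate directions
`∂₁ Re F = Re F'` and `∂₂ Re F = Re (i F')`, so `Δ Re F = Re F'' + Re (i² F'') = 0`.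
Since `p̂` is smooth across `Σ`, both one-sided traces are the values on the axis:
`p̂^± = Re F(x₁) = q̂(x₁)` and `p̂^±_{x₂} = -Im F'(x₁) = 0` because `F` has real coefficients;
moreover `q̂'' = Re F''(x₁) = -f̂(x₁)`. The three boundary relations then hold identically.
-/

section HarmonicRe

variable {F : ℂ → ℂ}

lemma hasDerivAt_re_horizontal {F' : ℂ} {x y : ℝ} (h : HasDerivAt F F' (x + I * y)) :
    HasDerivAt (fun t : ℝ => (F (t + I * y)).re) F'.re x :=
  (h.comp_add_const (x : ℂ) (I * y)).real_of_complex

lemma hasDerivAt_re_vertical {F' : ℂ} {x y : ℝ} (h : HasDerivAt F F' (x + I * y)) :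
    HasDerivAt (fun s : ℝ => (F (x + I * s)).re) (I * F').re y := by
  have hline : HasDerivAt (fun w : ℂ => (x : ℂ) + I * w) I y := by
    simpa using ((hasDerivAt_id (y : ℂ)).const_mul I).const_add (x : ℂ)
  simpa [mul_comm] using (h.comp (y : ℂ) hline).real_of_complex

lemma dy_re_eq (hF : Differentiable ℂ F) (x y : ℝ) :
    dy (fun x y => (F (x + I * y)).re) x y = (I * deriv F (x + I * y)).re :=
  (hasDerivAt_re_vertical (hF _).hasDerivAt).deriv

lemma dxx_re_eq (hF : Differentiable ℂ F) (x y : ℝ) :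
    dxx (fun x y => (F (x + I * y)).re) x y = (deriv (deriv F) (x + I * y)).re := by
  unfold dxx
  simp only [fun t => (hasDerivAt_re_horizontal (x := t) (y := y) (hF _).hasDerivAt).deriv]
  exact (hasDerivAt_re_horizontal (hF.deriv _).hasDerivAt).deriv

lemma dyy_re_eq (hF : Differentiable ℂ F) (x y : ℝ) :
    dyy (fun x y => (F (x + I * y)).re) x y = -(deriv (deriv F) (x + I * y)).re := by
  unfold dyy
  simp only [fun s => (hasDerivAt_re_vertical (x := x) (y := s) (hF _).hasDerivAt).deriv]
  rw [(hasDerivAt_re_vertical ((hF.deriv _).hasDerivAt.const_mul I)).deriv, ← mul_assoc, I_mul_I]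
  simp

lemma dxx_add_dyy_re_eq_zero (hF : Differentiable ℂ F) (x y : ℝ) :
    dxx (fun x y => (F (x + I * y)).re) x y + dyy (fun x y => (F (x + I * y)).re) x y = 0 := by
  rw [dxx_re_eq hF, dyy_re_eq hF, add_neg_cancel]

lemma continuous_dy_re (hF : Differentiable ℂ F) (x : ℝ) :
    Continuous fun y => dy (fun x y => (F (x + I * y)).re) x y := by
  simp only [dy_re_eq hF]
  have := hF.deriv.continuous
  fun_prop

end HarmonicRe

lemma hasDerivAt_sum_mul_pow_succ (s : Finset ℕ) (c : ℕ → ℂ) (n : ℕ → ℕ) (z : ℂ) :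
    HasDerivAt (fun z => ∑ k ∈ s, c k * z ^ (n k + 1))
      (∑ k ∈ s, c k * (n k + 1) * z ^ n k) z := by
  refine HasDerivAt.fun_sum fun k _ => ((hasDerivAt_pow (n k + 1) z).const_mul (c k)).congr_deriv ?_
  push_cast
  ring

noncomputable def pComplex (m : ℕ) (f : ℕ → ℝ) (q₀ q₁ : ℝ) (z : ℂ) : ℂ :=
  q₀ + q₁ * z - ∑ k ∈ Finset.range (m + 1), ((f k / ((k + 2) * (k + 1)) : ℝ) : ℂ) * z ^ (k + 2)

section

variable (m : ℕ) (f : ℕ → ℝ) (q₀ q₁ : ℝ)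

lemma pPoly_eq_re_pComplex :
    pPoly m f q₀ q₁ = fun (x y : ℝ) => (pComplex m f q₀ q₁ (x + I * y)).re := by
  ext x y
  simp only [pPoly, pComplex, sub_re, add_re, re_ofReal_mul, re_sum, ofReal_re]
  simp [mul_div_right_comm]

lemma hasDerivAt_pComplex (z : ℂ) :
    HasDerivAt (pComplex m f q₀ q₁)
      (q₁ - ∑ k ∈ Finset.range (m + 1), ((f k / (k + 1) : ℝ) : ℂ) * z ^ (k + 1)) z := by
  have := ((hasDerivAt_id z).const_mul (q₁ : ℂ)).const_add (q₀ : ℂ) |>.sub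
    (hasDerivAt_sum_mul_pow_succ (Finset.range (m + 1))
      (fun k => ((f k / ((k + 2) * (k + 1)) : ℝ) : ℂ)) (· + 1) z)
  refine this.congr_deriv ?_
  simp only [mul_one]
  congr 1
  refine Finset.sum_congr rfl fun k _ => ?_
  rw [show ((k + 1 : ℕ) : ℂ) + 1 = ((k + 2 : ℝ) : ℂ) by push_cast; ring, ← ofReal_mul]
  congr 2
  field_simp

lemma differentiable_pComplex : Differentiable ℂ (pComplex m f q₀ q₁) :=
  fun z => (hasDerivAt_pComplex m f q₀ q₁ z).differentiableAt

lemma deriv_deriv_pComplex (z : ℂ) :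
    deriv (deriv (pComplex m f q₀ q₁)) z = -∑ k ∈ Finset.range (m + 1), (f k : ℂ) * z ^ k := by
  have hderiv : deriv (pComplex m f q₀ q₁) = fun z =>
      q₁ - ∑ k ∈ Finset.range (m + 1), ((f k / (k + 1) : ℝ) : ℂ) * z ^ (k + 1) :=
    funext fun z => (hasDerivAt_pComplex m f q₀ q₁ z).deriv
  rw [hderiv]
  refine (((hasDerivAt_const z (q₁ : ℂ)).sub
    (hasDerivAt_sum_mul_pow_succ (Finset.range (m + 1)) _ id z)).congr_deriv ?_).deriv
  simp only [id, zero_sub, neg_inj]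
  refine Finset.sum_congr rfl fun k _ => ?_
  rw [show ((k : ℕ) : ℂ) + 1 = ((k + 1 : ℝ) : ℂ) by push_cast; ring, ← ofReal_mul]
  congr 2
  field_simp

lemma qPoly_eq_pPoly_zero : qPoly m f q₀ q₁ = fun x => pPoly m f q₀ q₁ x 0 := by
  ext x
  simp [pPoly, qPoly, ← ofReal_pow]

lemma dy_pPoly_zero (x : ℝ) : dy (pPoly m f q₀ q₁) x 0 = 0 := by
  rw [pPoly_eq_re_pComplex, dy_re_eq (differentiable_pComplex m f q₀ q₁),
    (hasDerivAt_pComplex m f q₀ q₁ _).deriv]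
  simp only [ofReal_zero, mul_zero, add_zero, ← ofReal_pow, ← ofReal_mul, ← ofReal_sum,
    ← ofReal_sub, I_mul_re, ofReal_im, neg_zero]

lemma deriv_deriv_qPoly (x : ℝ) : deriv (deriv (qPoly m f q₀ q₁)) x = -fPoly m f x := by
  have h := dxx_re_eq (differentiable_pComplex m f q₀ q₁) x 0
  rw [← pPoly_eq_re_pComplex, dxx, ← qPoly_eq_pPoly_zero, deriv_deriv_pComplex] at h
  simp [h, fPoly, re_sum, ← ofReal_pow]

end

/-- for the polynomial data `f̂, q̂, p̂` above, `p̂` is harmonic on `ℝ²`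
(hence on the cracked plane `Ω = ℝ² ∖ Σ`), and on `Σ = {x₁ < 0, x₂ = 0}` the pair
`(p̂,q̂)` satisfies the boundary conditions: the one-sided traces
`p̂^± = lim_{x₂→±0} p̂` and `p̂^±_{x₂} = lim_{x₂→±0} ∂p̂/∂x₂` exist and
`-(κ₁/2)p̂⁺_{x₂} - (κ₁/2)p̂⁻_{x₂} + p̂⁺ = q̂`, `(κ₁/2)p̂⁺_{x₂} + (κ₁/2)p̂⁻_{x₂} + p̂⁻ = q̂`,
and `-q̂_{x₁x₁} = f̂ + κ₂(p̂⁺_{x₂} - p̂⁻_{x₂})`. -/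
theorem stmt18 (m : ℕ) (f : ℕ → ℝ) (q₀ q₁ κ₁ κ₂ : ℝ) :
    (∀ x y : ℝ, dxx (pPoly m f q₀ q₁) x y + dyy (pPoly m f q₀ q₁) x y = 0) ∧
    (∀ x₁ : ℝ, x₁ < 0 →
      ∃ pp pm pyp pym : ℝ,
        Tendsto (fun y => pPoly m f q₀ q₁ x₁ y) (nhdsWithin 0 (Set.Ioi 0)) (nhds pp) ∧
        Tendsto (fun y => pPoly m f q₀ q₁ x₁ y) (nhdsWithin 0 (Set.Iio 0)) (nhds pm) ∧
        Tendsto (fun y => dy (pPoly m f q₀ q₁) x₁ y) (nhdsWithin 0 (Set.Ioi 0)) (nhds pyp) ∧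
        Tendsto (fun y => dy (pPoly m f q₀ q₁) x₁ y) (nhdsWithin 0 (Set.Iio 0)) (nhds pym) ∧
        -(κ₁/2) * pyp - (κ₁/2) * pym + pp = qPoly m f q₀ q₁ x₁ ∧
        (κ₁/2) * pyp + (κ₁/2) * pym + pm = qPoly m f q₀ q₁ x₁ ∧
        -(deriv (deriv (qPoly m f q₀ q₁)) x₁) = fPoly m f x₁ + κ₂ * (pyp - pym)) := by
  have hF := differentiable_pComplex m f q₀ q₁
  have hp := pPoly_eq_re_pComplex m f q₀ q₁
  refine ⟨fun x y => hp ▸ dxx_add_dyy_re_eq_zero hF x y, fun x₁ _ => ?_⟩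
  have hp_cont : Continuous fun y => pPoly m f q₀ q₁ x₁ y := by
    rw [hp]
    have := hF.continuous
    fun_prop
  have hdy_cont : Continuous fun y => dy (pPoly m f q₀ q₁) x₁ y :=
    hp ▸ continuous_dy_re hF x₁
  have hp_trace (s : Set ℝ) :
      Tendsto (fun y => pPoly m f q₀ q₁ x₁ y) (nhdsWithin 0 s) (nhds (qPoly m f q₀ q₁ x₁)) := by
    simpa only [qPoly_eq_pPoly_zero] using (hp_cont.tendsto 0).mono_left nhdsWithin_le_nhds
  have hdy_trace (s : Set ℝ) :
      Tendsto (fun y => dy (pPoly m f q₀ q₁) x₁ y) (nhdsWithin 0 s) (nhds 0) := by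
    simpa only [dy_pPoly_zero] using (hdy_cont.tendsto 0).mono_left nhdsWithin_le_nhds
  refine ⟨_, _, _, _, hp_trace _, hp_trace _, hdy_trace _, hdy_trace _, by ring, by ring, ?_⟩
  rw [deriv_deriv_qPoly]
  ring
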